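/- Weak duality for the discretized weak optimal control problem: with a time grid 0 = t₀ < … < t_{n_T} = T and a measurable partition X₁,…,X_{n_X} of X, suppose functions w_{i,k} and A w_{i,k} satisfy (i) A w_{i,k}(t,x,u) + ℓ(x,u) ≥ 0 on [t_{i-1},t_i] × X_k × U, (ii) w_{i,k}(t_{i-1},x) ≥ w_{i-1,k}(t_{i-1},x) on X_k for 2 ≤ i ≤ n_T, and (iii) w_{n_T,k}(T,x) ≤ φ(x) on X_k. Suppose nonnegative finite measures ν_{t_i,k} on X_k, ξ_{i,k} on [t_{i-1},t_i] × X_k × U, and signed measures π_{i,j,k} = −π_{i,k,j} on (t_{i-1},t_i) × (∂X_j ∩ ∂X_k) satisfy the local Dynkin constraints ∫ w(t_i,·)dν_{t_i,k} − ∫ w(t_{i-1},·)dν_{t_{i-1},k} = ∫ A w dξ_{i,k} + Σ_{j≠k} ∫ w dπ_{i,j,k} for all admissible test functions w (in particular for w = w_{i,k}), and that the w_{i,k} agree across spatial boundaries in the sense that ∫ w_{i,j} dπ_{i,j,k} = ∫ w_{i,k} dπ_{i,j,k}. Then Σ_k ∫ w_{1,k}(0,x) dν_{0,k}(x) ≤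 Σ_{i,k} ∫ ℓ dξ_{i,k} + Σ_k ∫ φ dν_{t_{n_T},k}, where ν_{0,k} is the restriction of the initial distribution ν₀ to X_k. -/
import Mathlib


open MeasureTheory

/-- The integral of a real function against a finite signed measure, via the Jordan
decomposition. -/
noncomputable def sintegral {α : Type*} [MeasurableSpace α]
    (π : SignedMeasure α) (f : α → ℝ) : ℝ :=
  (∫ x, f x ∂π.toJordanDecomposition.posPart) - ∫ x, f x ∂π.toJordanDecomposition.negPart

theorem sintegral_neg' {α : Type*} [MeasurableSpace α] (π : SignedMeasure α) (f : α → ℝ) :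
    sintegral (-π) f = - sintegral π f := by
  unfold sintegral
  rw [MeasureTheory.SignedMeasure.toJordanDecomposition_neg,
    MeasureTheory.JordanDecomposition.neg_posPart,
    MeasureTheory.JordanDecomposition.neg_negPart]
  ring

/-- Weak duality for the discretized weak optimal control problem: if the piecewise
functions `w_{i,k}` satisfy the generator inequality on each subdomain, monotonicity across
time breakpoints, and the terminal inequality, and the local occupation measures satisfy the
local Dynkin constraints (in particular for the test functions `w_{i,k}`) together with the
boundary agreement condition and antisymmetry of the boundary measures, then the discretized
dual objective lower-bounds the primal objective. -/
theorem discretized_weak_duality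
    {Xs Us : Type*} [MeasurableSpace Xs] [MeasurableSpace Us]
    (nT nX : ℕ) (hnT : 0 < nT) (T : ℝ)
    (τ : Fin (nT + 1) → ℝ) (hτmono : Monotone τ) (hτ0 : τ 0 = 0) (hτT : τ (Fin.last nT) = T)
    (Xp : Fin nX → Set Xs) (hXmeas : ∀ k, MeasurableSet (Xp k))
    (hdisj : Pairwise (Function.onFun Disjoint Xp)) (hcover : ⋃ k, Xp k = Set.univ)
    (ℓ : Xs → Us → ℝ) (φ : Xs → ℝ)
    (w : Fin nT → Fin nX → ℝ → Xs → ℝ)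
    (Aw : Fin nT → Fin nX → ℝ × Xs × Us → ℝ)
    (ν0 : Measure Xs) [IsProbabilityMeasure ν0]
    (ν : Fin (nT + 1) → Fin nX → Measure Xs)
    (hνfin : ∀ i k, IsFiniteMeasure (ν i k))
    (hν0 : ∀ k, ν 0 k = ν0.restrict (Xp k))
    (hνsupp : ∀ i k, ∀ᵐ x ∂(ν i k), x ∈ Xp k)
    (ξ : Fin nT → Fin nX → Measure (ℝ × Xs × Us))
    (hξfin : ∀ i k, IsFiniteMeasure (ξ i k))
    (hξsupp : ∀ i k, ∀ᵐ p ∂(ξ i k),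
        p.1 ∈ Set.Icc (τ i.castSucc) (τ i.succ) ∧ p.2.1 ∈ Xp k)
    (π : Fin nT → Fin nX → Fin nX → SignedMeasure (ℝ × Xs))
    (hπasym : ∀ i j k, π i j k = - π i k j)
    -- (i) generator inequality on each subdomain
    (hpos : ∀ i k, ∀ s ∈ Set.Icc (τ i.castSucc) (τ i.succ), ∀ x ∈ Xp k, ∀ u : Us,
        0 ≤ Aw i k (s, x, u) + ℓ x u)
    -- (ii) monotonicity at interior time breakpoints
    (hmono : ∀ (i : ℕ) (h : i + 1 < nT), ∀ k, ∀ x ∈ Xp k,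
        w ⟨i, by omega⟩ k (τ ⟨i + 1, by omega⟩) x ≤ w ⟨i + 1, h⟩ k (τ ⟨i + 1, by omega⟩) x)
    -- (iii) terminal inequality
    (hterm : ∀ k, ∀ x ∈ Xp k, w ⟨nT - 1, by omega⟩ k T x ≤ φ x)
    -- local Dynkin constraints for the test functions w_{i,k}
    (hdynkin : ∀ i k,
        (∫ x, w i k (τ i.succ) x ∂(ν i.succ k))
          - ∫ x, w i k (τ i.castSucc) x ∂(ν i.castSucc k)
        = (∫ p, Aw i k p ∂(ξ i k))
          + ∑ j ∈ Finset.univ.filter (· ≠ k),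
              sintegral (π i j k) (fun p => w i k p.1 p.2))
    -- agreement of the pieces across spatial boundaries
    (hagree : ∀ i j k,
        sintegral (π i j k) (fun p => w i j p.1 p.2)
          = sintegral (π i j k) (fun p => w i k p.1 p.2))
    -- integrability
    (hint_w : ∀ i k (t : ℝ) (m : Fin (nT + 1)), Integrable (w i k t) (ν m k))
    (hint_A : ∀ i k, Integrable (Aw i k) (ξ i k))
    (hint_ℓ : ∀ i k, Integrable (fun p : ℝ × Xs × Us => ℓ p.2.1 p.2.2) (ξ i k))
    (hint_φ : ∀ k, Integrable φ (ν (Fin.last nT) k)) :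
    ∑ k : Fin nX, ∫ x, w ⟨0, hnT⟩ k 0 x ∂(ν0.restrict (Xp k))
      ≤ (∑ i : Fin nT, ∑ k : Fin nX, ∫ p, ℓ p.2.1 p.2.2 ∂(ξ i k))
        + ∑ k : Fin nX, ∫ x, φ x ∂(ν (Fin.last nT) k) := by
  classical
  -- Lemma A: constraint + boundary cancellation + generator inequality
  have lemA : ∀ i : Fin nT,
      (∑ k, ∫ x, w i k (τ i.castSucc) x ∂(ν i.castSucc k))
      ≤ (∑ k, ∫ x, w i k (τ i.succ) x ∂(ν i.succ k))
        + ∑ k, ∫ p, ℓ p.2.1 p.2.2 ∂(ξ i k) := by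
    intro i
    set g : Fin nX → Fin nX → ℝ :=
      fun j k => sintegral (π i j k) (fun p => w i j p.1 p.2) with hg
    have hanti : ∀ a b : Fin nX, g b a = - g a b := by
      intro a b
      calc g b a = sintegral (π i b a) (fun p => w i a p.1 p.2) := hagree i b a
        _ = sintegral (-(π i a b)) (fun p => w i a p.1 p.2) := by rw [← hπasym i b a]
        _ = - g a b := sintegral_neg' _ _
    have hT : (∑ k, ∑ j ∈ Finset.univ.filter (· ≠ k),
        sintegral (π i j k) (fun p => w i k p.1 p.2)) = 0 := by
      have hrw : (∑ k, ∑ j ∈ Finset.univ.filter (· ≠ k),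
          sintegral (π i j k) (fun p => w i k p.1 p.2))
          = ∑ k, ∑ j, if j ≠ k then g j k else 0 := by
        refine Finset.sum_congr rfl fun k _ => ?_
        rw [Finset.sum_filter]
        refine Finset.sum_congr rfl fun j _ => ?_
        split_ifs with h
        · exact (hagree i j k).symm
        · rfl
      rw [hrw]
      have hcomm : (∑ k, ∑ j, if j ≠ k then g j k else 0)
          = ∑ j, ∑ k, if j ≠ k then g j k else 0 :=
        Finset.sum_comm
      have hdouble : (∑ k, ∑ j, if j ≠ k then g j k else 0)
          + (∑ k, ∑ j, if j ≠ k then g j k else 0) = 0 := by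
        nth_rewrite 1 [hcomm]
        rw [← Finset.sum_add_distrib]
        refine Finset.sum_eq_zero fun a _ => ?_
        rw [← Finset.sum_add_distrib]
        refine Finset.sum_eq_zero fun b _ => ?_
        by_cases h : a = b
        · simp [h]
        · rw [if_pos h, if_pos (Ne.symm h)]
          have := hanti a b
          linarith
      linarith
    have hdyn : (∑ k, ∫ x, w i k (τ i.succ) x ∂(ν i.succ k))
        - (∑ k, ∫ x, w i k (τ i.castSucc) x ∂(ν i.castSucc k))
        = ∑ k, ∫ p, Aw i k p ∂(ξ i k) := by
      rw [← Finset.sum_sub_distrib]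
      calc ∑ k, ((∫ x, w i k (τ i.succ) x ∂(ν i.succ k))
              - ∫ x, w i k (τ i.castSucc) x ∂(ν i.castSucc k))
          = ∑ k, ((∫ p, Aw i k p ∂(ξ i k))
              + ∑ j ∈ Finset.univ.filter (· ≠ k),
                  sintegral (π i j k) (fun p => w i k p.1 p.2)) :=
            Finset.sum_congr rfl fun k _ => hdynkin i k
        _ = (∑ k, ∫ p, Aw i k p ∂(ξ i k))
              + ∑ k, ∑ j ∈ Finset.univ.filter (· ≠ k),
                  sintegral (π i j k) (fun p => w i k p.1 p.2) :=
            Finset.sum_add_distrib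
        _ = ∑ k, ∫ p, Aw i k p ∂(ξ i k) := by rw [hT]; ring
    have hAk : ∀ k, -(∫ p, ℓ p.2.1 p.2.2 ∂(ξ i k)) ≤ ∫ p, Aw i k p ∂(ξ i k) := by
      intro k
      have h0 : 0 ≤ ∫ p, (Aw i k p + ℓ p.2.1 p.2.2) ∂(ξ i k) := by
        refine integral_nonneg_of_ae ?_
        filter_upwards [hξsupp i k] with p hp
        exact hpos i k p.1 hp.1 p.2.1 hp.2 p.2.2
      rw [integral_add (hint_A i k) (hint_ℓ i k)] at h0
      linarith
    have hsum : -(∑ k, ∫ p, ℓ p.2.1 p.2.2 ∂(ξ i k))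
        ≤ ∑ k, ∫ p, Aw i k p ∂(ξ i k) := by
      rw [← Finset.sum_neg_distrib]
      exact Finset.sum_le_sum fun k _ => hAk k
    linarith
  -- Lemma B: monotonicity across time breakpoints
  have lemB : ∀ (i i' : Fin nT), (i' : ℕ) = (i : ℕ) + 1 →
      (∑ k, ∫ x, w i k (τ i.succ) x ∂(ν i.succ k))
      ≤ ∑ k, ∫ x, w i' k (τ i'.castSucc) x ∂(ν i'.castSucc k) := by
    intro i i' hii'
    have h : (i : ℕ) + 1 < nT := hii' ▸ i'.isLt
    have hi' : i' = ⟨(i : ℕ) + 1, h⟩ := Fin.ext hii'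
    subst hi'
    refine Finset.sum_le_sum fun k _ => ?_
    refine integral_mono_ae (hint_w _ _ _ _) (hint_w _ _ _ _) ?_
    filter_upwards [hνsupp (Fin.castSucc ⟨(i : ℕ) + 1, h⟩) k] with x hx
    exact hmono (i : ℕ) h k x hx
  -- Lemma C: terminal inequality
  have lemC : ∀ i : Fin nT, (i : ℕ) = nT - 1 →
      (∑ k, ∫ x, w i k (τ i.succ) x ∂(ν i.succ k))
      ≤ ∑ k, ∫ x, φ x ∂(ν (Fin.last nT) k) := by
    intro i hi
    obtain ⟨iv, hlt⟩ := i
    simp only [Fin.val_mk] at hi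
    subst hi
    have hlast : Fin.succ (⟨nT - 1, by omega⟩ : Fin nT) = Fin.last nT := by
      ext
      simp [Fin.val_last]
      omega
    rw [hlast, hτT]
    refine Finset.sum_le_sum fun k _ => ?_
    refine integral_mono_ae (hint_w _ _ _ _) (hint_φ k) ?_
    filter_upwards [hνsupp (Fin.last nT) k] with x hx
    exact hterm k x hx
  -- Main downward induction
  have key : ∀ d : ℕ, ∀ j : ℕ, ∀ hj : j < nT, nT - 1 - j = d →
      (∑ k, ∫ x, w ⟨j, hj⟩ k (τ (Fin.castSucc ⟨j, hj⟩)) x ∂(ν (Fin.castSucc ⟨j, hj⟩) k))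
      ≤ (∑ i : Fin nT, if j ≤ (i : ℕ) then ∑ k, ∫ p, ℓ p.2.1 p.2.2 ∂(ξ i k) else 0)
        + ∑ k, ∫ x, φ x ∂(ν (Fin.last nT) k) := by
    intro d
    induction d with
    | zero =>
      intro j hj hd
      have hjeq : j = nT - 1 := by omega
      subst hjeq
      have hA := lemA ⟨nT - 1, hj⟩
      have hC := lemC ⟨nT - 1, hj⟩ rfl
      have hsum : (∑ i : Fin nT, if nT - 1 ≤ (i : ℕ)
            then ∑ k, ∫ p, ℓ p.2.1 p.2.2 ∂(ξ i k) else 0)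
          = ∑ k, ∫ p, ℓ p.2.1 p.2.2 ∂(ξ (⟨nT - 1, hj⟩ : Fin nT) k) := by
        rw [Finset.sum_eq_single (⟨nT - 1, hj⟩ : Fin nT)]
        · rw [if_pos le_rfl]
        · intro b _ hb
          rw [if_neg]
          intro hle
          exact hb (Fin.ext (show (b : ℕ) = nT - 1 by have := b.isLt; omega))
        · intro h; exact absurd (Finset.mem_univ _) h
      rw [hsum]
      linarith
    | succ d ih =>
      intro j hj hd
      have hj1 : j + 1 < nT := by omega
      have hIH := ih (j + 1) hj1 (by omega)
      have hA := lemA ⟨j, hj⟩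
      have hB := lemB ⟨j, hj⟩ ⟨j + 1, hj1⟩ rfl
      have hsplit : (∑ i : Fin nT, if j ≤ (i : ℕ)
            then ∑ k, ∫ p, ℓ p.2.1 p.2.2 ∂(ξ i k) else 0)
          = (∑ k, ∫ p, ℓ p.2.1 p.2.2 ∂(ξ (⟨j, hj⟩ : Fin nT) k))
            + ∑ i : Fin nT, if j + 1 ≤ (i : ℕ)
                then ∑ k, ∫ p, ℓ p.2.1 p.2.2 ∂(ξ i k) else 0 := by
        have hpt : ∀ i : Fin nT, (if j ≤ (i : ℕ)
              then ∑ k, ∫ p, ℓ p.2.1 p.2.2 ∂(ξ i k) else 0)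
            = (if (i : ℕ) = j then ∑ k, ∫ p, ℓ p.2.1 p.2.2 ∂(ξ i k) else 0)
              + (if j + 1 ≤ (i : ℕ) then ∑ k, ∫ p, ℓ p.2.1 p.2.2 ∂(ξ i k) else 0) := by
          intro i
          rcases lt_trichotomy (i : ℕ) j with h | h | h
          · rw [if_neg (by omega), if_neg (by omega), if_neg (by omega)]; ring
          · rw [if_pos (by omega), if_pos (by omega), if_neg (by omega)]; ring
          · rw [if_pos (by omega), if_neg (by omega), if_pos (by omega)]; ring
        rw [Finset.sum_congr rfl fun i _ => hpt i, Finset.sum_add_distrib]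
        congr 1
        rw [Finset.sum_eq_single (⟨j, hj⟩ : Fin nT)]
        · rw [if_pos rfl]
        · intro b _ hb
          rw [if_neg]
          intro hbe
          exact hb (Fin.ext hbe)
        · intro h; exact absurd (Finset.mem_univ _) h
      rw [hsplit]
      linarith
  -- Assemble
  have hfin := key (nT - 1) 0 hnT (by omega)
  have h0cast : Fin.castSucc (⟨0, hnT⟩ : Fin nT) = (0 : Fin (nT + 1)) := by
    ext; simp
  rw [h0cast, hτ0] at hfin
  simp only [hν0] at hfin
  have hR : (∑ i : Fin nT, if 0 ≤ (i : ℕ)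
        then ∑ k, ∫ p, ℓ p.2.1 p.2.2 ∂(ξ i k) else 0)
      = ∑ i : Fin nT, ∑ k, ∫ p, ℓ p.2.1 p.2.2 ∂(ξ i k) := by
    simp
  rw [hR] at hfin
  exact hfin
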